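/- Let n ≥ 2 be an integer. Let F : ℝⁿ → ℝⁿ be differentiable everywhere with Jacobian J(x), let x* ∈ ℝⁿ satisfy F(x*) = 0 with J* := J(x*) invertible and c := ‖J*⁻¹‖, and suppose ‖J(x) − J(x*)‖ ≤ M‖x − x*‖ for all x ∈ ℝⁿ, where M > 0. Let x_k ∈ ℝⁿ, B_k ∈ ℝ^{n×n} be generated by the greedy Broyden's method with each B_k invertible. If 48√n c M ‖x₀ − x*‖ + c‖B₀ − J(x₀)‖_F ≤ 1/3, then for all k ≥ 0, ‖x_{k+1} − x*‖ ≤ e·(1 − 1/n)^{k/2}·‖x_k − x*‖. -/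

import Mathlib

open Matrix

noncomputable def vecNorm {n : ℕ} (u : Fin n → ℝ) : ℝ := Real.sqrt (∑ i, u i ^ 2)

noncomputable def frobNorm {n : ℕ} (M : Matrix (Fin n) (Fin n) ℝ) : ℝ :=
  Real.sqrt (∑ i, ∑ j, M i j ^ 2)

noncomputable def specNorm {n : ℕ} (M : Matrix (Fin n) (Fin n) ℝ) : ℝ :=
  sSup {r : ℝ | ∃ u : Fin n → ℝ, vecNorm u = 1 ∧ r = vecNorm (M.mulVec u)}

noncomputable def broyd {n : ℕ} (B A : Matrix (Fin n) (Fin n) ℝ) (u : Fin n → ℝ) :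
    Matrix (Fin n) (Fin n) ℝ :=
  B + (∑ i, u i ^ 2)⁻¹ • ((A - B) * Matrix.vecMulVec u u)

noncomputable def matCLM {n : ℕ} (M : Matrix (Fin n) (Fin n) ℝ) :
    (Fin n → ℝ) →L[ℝ] (Fin n → ℝ) :=
  LinearMap.toContinuousLinearMap M.mulVecLin


/-!
Write `c = ‖J(x*)⁻¹‖`, `τₖ = ‖xₖ - x*‖`, `gₖ = c‖Bₖ - J(xₖ)‖_F`, `tₖ = cMτₖ`
and `q = √(1 - 1/n)`. By the Banach perturbation lemma, one quasi-Newton step satisfies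
`τₖ₊₁ ≤ 2(gₖ + 2tₖ)τₖ` as long as `gₖ + 2tₖ ≤ 1/2`. The greedy column removes at least
a `1/n` share of `‖Bₖ - J(xₖ₊₁)‖_F²`, so `gₖ₊₁ ≤ q(gₖ + √n(tₖ + tₖ₊₁))`. For `n ≥ 2`
these two recursions make the potential `gₖ + 36√n tₖ` decay like `qᵏ`,
whence `τₖ₊₁ ≤ (2/3)qᵏτₖ`.
-/

section Norms

variable {n : ℕ}

lemma vecNorm_eq_norm (u : Fin n → ℝ) : vecNorm u = ‖WithLp.toLp 2 u‖ := by
  simp [vecNorm, EuclideanSpace.norm_eq]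

lemma vecNorm_nonneg (u : Fin n → ℝ) : 0 ≤ vecNorm u := Real.sqrt_nonneg _

lemma vecNorm_sq (u : Fin n → ℝ) : vecNorm u ^ 2 = ∑ i, u i ^ 2 :=
  Real.sq_sqrt (Finset.sum_nonneg fun _ _ => sq_nonneg _)

lemma vecNorm_add_le (u v : Fin n → ℝ) : vecNorm (u + v) ≤ vecNorm u + vecNorm v := by
  simpa only [vecNorm_eq_norm, WithLp.toLp_add] using norm_add_le _ _

lemma vecNorm_sub_le (u v : Fin n → ℝ) : vecNorm (u - v) ≤ vecNorm u + vecNorm v := by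
  simpa only [vecNorm_eq_norm, WithLp.toLp_sub] using norm_sub_le _ _

lemma vecNorm_smul (a : ℝ) (u : Fin n → ℝ) : vecNorm (a • u) = |a| * vecNorm u := by
  simp only [vecNorm_eq_norm, WithLp.toLp_smul, norm_smul, Real.norm_eq_abs]

lemma vecNorm_single (i : Fin n) : vecNorm (Pi.single i (1 : ℝ)) = 1 := by
  simp [vecNorm_eq_norm]

lemma frobNorm_nonneg (A : Matrix (Fin n) (Fin n) ℝ) : 0 ≤ frobNorm A := Real.sqrt_nonneg _

lemma frobNorm_sq (A : Matrix (Fin n) (Fin n) ℝ) : frobNorm A ^ 2 = ∑ i, ∑ j, A i j ^ 2 :=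
  Real.sq_sqrt (Finset.sum_nonneg fun _ _ => Finset.sum_nonneg fun _ _ => sq_nonneg _)

lemma frobNorm_eq_norm (A : Matrix (Fin n) (Fin n) ℝ) :
    frobNorm A = ‖(WithLp.toLp 2 fun p : Fin n × Fin n => A p.1 p.2 : EuclideanSpace ℝ _)‖ := by
  simp [frobNorm, EuclideanSpace.norm_eq, Fintype.sum_prod_type]

lemma frobNorm_add_le (A B : Matrix (Fin n) (Fin n) ℝ) :
    frobNorm (A + B) ≤ frobNorm A + frobNorm B := by
  have hflat : (fun p : Fin n × Fin n => (A + B) p.1 p.2)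
      = (fun p => A p.1 p.2) + fun p => B p.1 p.2 := rfl
  simp only [frobNorm_eq_norm, hflat, WithLp.toLp_add]
  exact norm_add_le _ _

lemma frobNorm_sq_eq_sum_col (A : Matrix (Fin n) (Fin n) ℝ) :
    frobNorm A ^ 2 = ∑ j, vecNorm (A *ᵥ Pi.single j 1) ^ 2 := by
  rw [frobNorm_sq, Finset.sum_comm]
  simp [vecNorm_sq]

lemma vecNorm_mulVec_le_frobNorm_mul (A : Matrix (Fin n) (Fin n) ℝ) (u : Fin n → ℝ) :
    vecNorm (A *ᵥ u) ≤ frobNorm A * vecNorm u := by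
  refine (pow_le_pow_iff_left₀ (vecNorm_nonneg _)
    (mul_nonneg (frobNorm_nonneg A) (vecNorm_nonneg u)) two_ne_zero).1 ?_
  rw [mul_pow, vecNorm_sq, frobNorm_sq, vecNorm_sq, Finset.sum_mul]
  exact Finset.sum_le_sum fun i _ => Finset.sum_mul_sq_le_sq_mul_sq Finset.univ (A i) u

lemma frobNorm_le_sqrt_mul_of_col_le (A : Matrix (Fin n) (Fin n) ℝ) {r : ℝ} (hr : 0 ≤ r)
    (hcol : ∀ j, vecNorm (A *ᵥ Pi.single j 1) ≤ r) : frobNorm A ≤ √n * r := by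
  have hsq : frobNorm A ^ 2 ≤ (√n * r) ^ 2 := by
    rw [frobNorm_sq_eq_sum_col, mul_pow, Real.sq_sqrt n.cast_nonneg]
    simpa using Finset.sum_le_sum (s := Finset.univ) fun j _ =>
      pow_le_pow_left₀ (vecNorm_nonneg _) (hcol j) 2
  exact (pow_le_pow_iff_left₀ (frobNorm_nonneg A) (by positivity) two_ne_zero).1 hsq

end Norms

section SpectralNorm

variable {n : ℕ}

lemma specNorm_nonneg (A : Matrix (Fin n) (Fin n) ℝ) : 0 ≤ specNorm A :=
  Real.sSup_nonneg fun _ ⟨_, _, hr⟩ => hr ▸ vecNorm_nonneg _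

lemma vecNorm_mulVec_le_specNorm_mul (A : Matrix (Fin n) (Fin n) ℝ) (u : Fin n → ℝ) :
    vecNorm (A *ᵥ u) ≤ specNorm A * vecNorm u := by
  rcases (vecNorm_nonneg u).eq_or_lt with hu | hu
  · simpa [← hu] using vecNorm_mulVec_le_frobNorm_mul A u
  have hbdd : BddAbove {r : ℝ | ∃ v : Fin n → ℝ, vecNorm v = 1 ∧ r = vecNorm (A *ᵥ v)} :=
    ⟨frobNorm A, by
      rintro _ ⟨v, hv, rfl⟩
      simpa [hv] using vecNorm_mulVec_le_frobNorm_mul A v⟩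
  have hunit : vecNorm ((vecNorm u)⁻¹ • u) = 1 := by
    rw [vecNorm_smul, abs_of_pos (inv_pos.2 hu), inv_mul_cancel₀ hu.ne']
  have hle := le_csSup hbdd ⟨_, hunit, rfl⟩
  rw [Matrix.mulVec_smul, vecNorm_smul, abs_of_pos (inv_pos.2 hu), inv_mul_le_iff₀ hu] at hle
  rwa [mul_comm]

lemma norm_toEuclideanCLM_le_specNorm (A : Matrix (Fin n) (Fin n) ℝ) :
    ‖Matrix.toEuclideanCLM (𝕜 := ℝ) A‖ ≤ specNorm A :=
  ContinuousLinearMap.opNorm_le_bound _ (specNorm_nonneg A) fun y => by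
    simpa [vecNorm_eq_norm, ← Matrix.toEuclideanCLM_toLp] using
      vecNorm_mulVec_le_specNorm_mul A y.ofLp

end SpectralNorm

section GreedyUpdate

variable {n : ℕ}

lemma broyd_single_sub_mulVec_single (B A : Matrix (Fin n) (Fin n) ℝ) (i j : Fin n) :
    (broyd B A (Pi.single i 1) - A) *ᵥ Pi.single j 1
      = if j = i then 0 else (B - A) *ᵥ Pi.single j 1 := by
  ext a
  by_cases h : j = i <;>
    simp [h, broyd, Matrix.mul_apply, Matrix.vecMulVec_apply, Pi.single_apply]

lemma frobNorm_broyd_single_sub_sq (B A : Matrix (Fin n) (Fin n) ℝ) (i : Fin n) :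
    frobNorm (broyd B A (Pi.single i 1) - A) ^ 2
      = frobNorm (B - A) ^ 2 - vecNorm ((B - A) *ᵥ Pi.single i 1) ^ 2 := by
  simp only [frobNorm_sq_eq_sum_col, broyd_single_sub_mulVec_single, apply_ite vecNorm,
    apply_ite (· ^ 2)]
  rw [← Finset.add_sum_erase _ _ (Finset.mem_univ i),
    ← Finset.add_sum_erase _ _ (Finset.mem_univ i),
    Finset.sum_congr rfl fun j hj => if_neg (Finset.ne_of_mem_erase hj)]
  simp [vecNorm_eq_norm]

lemma frobNorm_broyd_greedy_le (B A : Matrix (Fin n) (Fin n) ℝ) (i : Fin n)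
    (hgreedy : ∀ j, vecNorm ((B - A) *ᵥ Pi.single j 1) ≤ vecNorm ((B - A) *ᵥ Pi.single i 1)) :
    frobNorm (broyd B A (Pi.single i 1) - A) ≤ √(1 - 1 / n) * frobNorm (B - A) := by
  have hn : (0 : ℝ) < n := Nat.cast_pos.2 i.pos
  have hfrob : frobNorm (B - A) ^ 2 ≤ n * vecNorm ((B - A) *ᵥ Pi.single i 1) ^ 2 := by
    rw [frobNorm_sq_eq_sum_col]
    simpa using Finset.sum_le_sum (s := Finset.univ) fun j _ =>
      pow_le_pow_left₀ (vecNorm_nonneg _) (hgreedy j) 2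
  have hsq :
      frobNorm (broyd B A (Pi.single i 1) - A) ^ 2 ≤ (1 - 1 / n) * frobNorm (B - A) ^ 2 := by
    have hcol : 1 / n * frobNorm (B - A) ^ 2 ≤ vecNorm ((B - A) *ᵥ Pi.single i 1) ^ 2 := by
      rwa [one_div, inv_mul_le_iff₀ hn]
    rw [frobNorm_broyd_single_sub_sq, sub_mul, one_mul]
    linarith
  rw [← Real.sqrt_sq (frobNorm_nonneg (B - A)), ← Real.sqrt_mul' _ (sq_nonneg _),
    ← Real.sqrt_sq (frobNorm_nonneg (broyd B A (Pi.single i 1) - A))]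
  exact Real.sqrt_le_sqrt hsq

end GreedyUpdate

section Taylor

theorem norm_image_sub_sub_fderiv_le_of_lipschitzAt {E F : Type*} [NormedAddCommGroup E]
    [NormedSpace ℝ E] [NormedAddCommGroup F] [NormedSpace ℝ F] {f : E → F} {f' : E → E →L[ℝ] F}
    {x₀ : E} {M : ℝ} (hf : ∀ x, HasFDerivAt f (f' x) x) (hM : 0 ≤ M)
    (hLip : ∀ x, ‖f' x - f' x₀‖ ≤ M * ‖x - x₀‖) (y : E) :
    ‖f y - f x₀ - f' x₀ (y - x₀)‖ ≤ M * ‖y - x₀‖ ^ 2 := by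
  have h := (convex_closedBall x₀ ‖y - x₀‖).norm_image_sub_le_of_norm_hasFDerivWithin_le'
    (fun x _ => (hf x).hasFDerivWithinAt)
    (fun x hx => (hLip x).trans (mul_le_mul_of_nonneg_left (mem_closedBall_iff_norm.1 hx) hM))
    (Metric.mem_closedBall_self (norm_nonneg _)) (mem_closedBall_iff_norm.2 le_rfl)
  rwa [mul_assoc, ← sq] at h

variable {n : ℕ}

lemma vecNorm_sub_sub_mulVec_le {F : (Fin n → ℝ) → (Fin n → ℝ)}
    {J : (Fin n → ℝ) → Matrix (Fin n) (Fin n) ℝ} (hF : ∀ x, HasFDerivAt F (matCLM (J x)) x)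
    {xs : Fin n → ℝ} {M : ℝ} (hM : 0 ≤ M)
    (hLip : ∀ x, specNorm (J x - J xs) ≤ M * vecNorm (x - xs)) (y : Fin n → ℝ) :
    vecNorm (F y - F xs - J xs *ᵥ (y - xs)) ≤ M * vecNorm (y - xs) ^ 2 := by
  let e : EuclideanSpace ℝ (Fin n) ≃L[ℝ] (Fin n → ℝ) := PiLp.continuousLinearEquiv 2 ℝ _
  have hFe : ∀ z, HasFDerivAt (e.symm ∘ F ∘ e) (Matrix.toEuclideanCLM (𝕜 := ℝ) (J (e z))) z := by
    intro z
    have hconj :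
        (e.symm : (Fin n → ℝ) →L[ℝ] _).comp ((matCLM (J (e z))).comp (e : _ →L[ℝ] _))
        = Matrix.toEuclideanCLM (𝕜 := ℝ) (J (e z)) := by
      ext1; rfl
    exact hconj ▸ e.symm.hasFDerivAt.comp z ((hF (e z)).comp z e.hasFDerivAt)
  have h := norm_image_sub_sub_fderiv_le_of_lipschitzAt hFe hM (x₀ := e.symm xs)
    (fun z => by
      rw [← map_sub]
      refine (norm_toEuclideanCLM_le_specNorm _).trans ?_
      simpa [vecNorm_eq_norm, e, PiLp.coe_continuousLinearEquiv] using hLip (e z))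
    (e.symm y)
  simpa [vecNorm_eq_norm, e, PiLp.coe_continuousLinearEquiv, Matrix.mulVec_sub] using h

end Taylor

section QuasiNewtonStep

variable {n : ℕ}

lemma vecNorm_le_of_perturbation {A B : Matrix (Fin n) (Fin n) ℝ} (hA : IsUnit A) {δ : ℝ}
    (hδ : specNorm A⁻¹ * δ ≤ 1 / 2) (hBA : ∀ v, vecNorm ((B - A) *ᵥ v) ≤ δ * vecNorm v)
    (v : Fin n → ℝ) : vecNorm v ≤ 2 * specNorm A⁻¹ * vecNorm (B *ᵥ v) := by
  have hv : v = A⁻¹ *ᵥ (B *ᵥ v - (B - A) *ᵥ v) := by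
    rw [Matrix.sub_mulVec, sub_sub_cancel, Matrix.mulVec_mulVec,
      Matrix.nonsing_inv_mul _ ((A.isUnit_iff_isUnit_det).1 hA), Matrix.one_mulVec]
  have hle : vecNorm v ≤ specNorm A⁻¹ * (vecNorm (B *ᵥ v) + δ * vecNorm v) :=
    calc vecNorm v = vecNorm (A⁻¹ *ᵥ (B *ᵥ v - (B - A) *ᵥ v)) := congrArg vecNorm hv
      _ ≤ specNorm A⁻¹ * vecNorm (B *ᵥ v - (B - A) *ᵥ v) :=
        vecNorm_mulVec_le_specNorm_mul _ _
      _ ≤ specNorm A⁻¹ * (vecNorm (B *ᵥ v) + δ * vecNorm v) :=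
        mul_le_mul_of_nonneg_left ((vecNorm_sub_le _ _).trans (add_le_add_right (hBA v) _))
          (specNorm_nonneg _)
  nlinarith [mul_le_mul_of_nonneg_right hδ (vecNorm_nonneg v)]

lemma isUnit_of_perturbation {A B : Matrix (Fin n) (Fin n) ℝ} (hA : IsUnit A) {δ : ℝ}
    (hδ : specNorm A⁻¹ * δ ≤ 1 / 2) (hBA : ∀ v, vecNorm ((B - A) *ᵥ v) ≤ δ * vecNorm v) :
    IsUnit B := by
  refine Matrix.mulVec_injective_iff_isUnit.1 fun u w huw => ?_
  have h := vecNorm_le_of_perturbation hA hδ hBA (u - w)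
  rw [Matrix.mulVec_sub, huw, sub_self] at h
  simpa [vecNorm_eq_norm, sub_eq_zero] using h

lemma vecNorm_quasiNewton_step_le {F : (Fin n → ℝ) → (Fin n → ℝ)}
    {J : (Fin n → ℝ) → Matrix (Fin n) (Fin n) ℝ} (hF : ∀ x, HasFDerivAt F (matCLM (J x)) x)
    {xs : Fin n → ℝ} (hxs : F xs = 0) (hJs : IsUnit (J xs)) {M : ℝ} (hM : 0 ≤ M)
    (hLip : ∀ x, specNorm (J x - J xs) ≤ M * vecNorm (x - xs))
    (B : Matrix (Fin n) (Fin n) ℝ) (x : Fin n → ℝ)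
    {r : ℝ} (hr : specNorm (J xs)⁻¹ * (frobNorm (B - J x) + 2 * M * vecNorm (x - xs)) ≤ r)
    (hr_le : r ≤ 1 / 2) :
    vecNorm (x - B⁻¹ *ᵥ F x - xs) ≤ 2 * r * vecNorm (x - xs) := by
  set τ := vecNorm (x - xs)
  have hsmall : specNorm (J xs)⁻¹ * (frobNorm (B - J x) + M * τ) ≤ 1 / 2 := by
    nlinarith [mul_nonneg (specNorm_nonneg (J xs)⁻¹) (mul_nonneg hM (vecNorm_nonneg (x - xs)))]
  have hJx : ∀ v, vecNorm ((J x - J xs) *ᵥ v) ≤ M * τ * vecNorm v := fun v =>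
    (vecNorm_mulVec_le_specNorm_mul _ v).trans
      (mul_le_mul_of_nonneg_right (hLip x) (vecNorm_nonneg v))
  have hBx : ∀ v, vecNorm ((B - J x) *ᵥ v) ≤ frobNorm (B - J x) * vecNorm v :=
    vecNorm_mulVec_le_frobNorm_mul _
  have hBxs :
      ∀ v, vecNorm ((B - J xs) *ᵥ v) ≤ (frobNorm (B - J x) + M * τ) * vecNorm v := by
    intro v
    rw [show B - J xs = (B - J x) + (J x - J xs) by abel, Matrix.add_mulVec, add_mul]
    exact (vecNorm_add_le _ _).trans (add_le_add (hBx v) (hJx v))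
  have hB : IsUnit B := isUnit_of_perturbation hJs hsmall hBxs
  have hresidual : B *ᵥ (x - B⁻¹ *ᵥ F x - xs)
      = (B - J x) *ᵥ (x - xs) + (J x - J xs) *ᵥ (x - xs)
        - (F x - F xs - J xs *ᵥ (x - xs)) := by
    rw [Matrix.mulVec_sub, Matrix.mulVec_sub, Matrix.mulVec_mulVec,
      Matrix.mul_nonsing_inv _ ((B.isUnit_iff_isUnit_det).1 hB), Matrix.one_mulVec,
      Matrix.sub_mulVec, Matrix.sub_mulVec, Matrix.mulVec_sub, hxs]
    abel
  have hBe :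
      vecNorm (B *ᵥ (x - B⁻¹ *ᵥ F x - xs)) ≤ (frobNorm (B - J x) + 2 * M * τ) * τ := by
    rw [hresidual]
    have := vecNorm_sub_sub_mulVec_le hF hM hLip x
    linarith [vecNorm_sub_le ((B - J x) *ᵥ (x - xs) + (J x - J xs) *ᵥ (x - xs))
      (F x - F xs - J xs *ᵥ (x - xs)), vecNorm_add_le ((B - J x) *ᵥ (x - xs))
      ((J x - J xs) *ᵥ (x - xs)), hBx (x - xs), hJx (x - xs)]
  calc vecNorm (x - B⁻¹ *ᵥ F x - xs)
      ≤ 2 * specNorm (J xs)⁻¹ * ((frobNorm (B - J x) + 2 * M * τ) * τ) :=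
        (vecNorm_le_of_perturbation hJs hsmall hBxs _).trans
          (mul_le_mul_of_nonneg_left hBe (mul_nonneg zero_le_two (specNorm_nonneg _)))
    _ ≤ 2 * r * τ := by nlinarith [vecNorm_nonneg (x - xs)]

end QuasiNewtonStep

section Recursion

variable {n : ℕ}

lemma frobNorm_sub_le_of_lipschitzAt {J : (Fin n → ℝ) → Matrix (Fin n) (Fin n) ℝ}
    {xs : Fin n → ℝ} {M : ℝ} (hM : 0 ≤ M)
    (hLip : ∀ x, specNorm (J x - J xs) ≤ M * vecNorm (x - xs))
    (y z : Fin n → ℝ) :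
    frobNorm (J y - J z) ≤ √n * (M * (vecNorm (y - xs) + vecNorm (z - xs))) := by
  refine frobNorm_le_sqrt_mul_of_col_le _
    (mul_nonneg hM (add_nonneg (vecNorm_nonneg _) (vecNorm_nonneg _))) fun j => ?_
  have hcol : ∀ x, vecNorm ((J x - J xs) *ᵥ Pi.single j 1) ≤ M * vecNorm (x - xs) := by
    intro x
    simpa [vecNorm_single] using (vecNorm_mulVec_le_specNorm_mul _ _).trans
      (mul_le_mul_of_nonneg_right (hLip x) (vecNorm_nonneg (Pi.single j (1 : ℝ))))
  rw [show J y - J z = (J y - J xs) - (J z - J xs) by abel, Matrix.sub_mulVec, mul_add]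
  exact (vecNorm_sub_le _ _).trans (add_le_add (hcol y) (hcol z))

lemma frobNorm_broyd_greedy_sub_le {J : (Fin n → ℝ) → Matrix (Fin n) (Fin n) ℝ}
    {xs : Fin n → ℝ} {M : ℝ} (hM : 0 ≤ M)
    (hLip : ∀ x, specNorm (J x - J xs) ≤ M * vecNorm (x - xs))
    (B : Matrix (Fin n) (Fin n) ℝ) (x x' : Fin n → ℝ) (i : Fin n)
    (hgreedy :
      ∀ j, vecNorm ((B - J x') *ᵥ Pi.single j 1) ≤ vecNorm ((B - J x') *ᵥ Pi.single i 1)) :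
    frobNorm (broyd B (J x') (Pi.single i 1) - J x') ≤ √(1 - 1 / n)
      * (frobNorm (B - J x) + √n * (M * (vecNorm (x - xs) + vecNorm (x' - xs)))) := by
  refine (frobNorm_broyd_greedy_le B (J x') i hgreedy).trans
    (mul_le_mul_of_nonneg_left ?_ (Real.sqrt_nonneg _))
  rw [show B - J x' = (B - J x) + (J x - J x') by abel]
  exact (frobNorm_add_le _ _).trans
    (add_le_add_right (frobNorm_sub_le_of_lipschitzAt hM hLip x x') _)

lemma sqrt_one_sub_one_div_mem_Icc (hn : 2 ≤ n) : √(1 - 1 / (n : ℝ)) ∈ Set.Icc (7 / 10) 1 := by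
  have hn₂ : (2 : ℝ) ≤ n := by exact_mod_cast hn
  have hinv : 1 / (n : ℝ) ≤ 1 / 2 := one_div_le_one_div_of_le two_pos hn₂
  refine ⟨Real.le_sqrt_of_sq_le (by linarith), Real.sqrt_le_one.2 ?_⟩
  linarith [one_div_nonneg.2 (by linarith : (0 : ℝ) ≤ n)]

lemma greedy_broyden_potential_le {g t : ℕ → ℝ} {s q : ℝ} (ht : ∀ k, 0 ≤ t k) (hs : 1 ≤ s)
    (hq : 7 / 10 ≤ q) (hq₁ : q ≤ 1) (h₀ : g 0 + 36 * s * t 0 ≤ 1 / 3)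
    (ht_succ : ∀ k, g k + 2 * t k ≤ 1 / 3 → t (k + 1) ≤ 2 / 3 * t k)
    (hg_succ : ∀ k, g (k + 1) ≤ q * (g k + s * (t k + t (k + 1)))) (k : ℕ) :
    g k + 2 * t k ≤ q ^ k / 3 := by
  have h2t : ∀ k, 2 * t k ≤ 36 * s * t k := fun k => by nlinarith [ht k]
  -- `g + 36 s t` contracts by `q` as soon as `q ≥ 72 / 103`.
  have hpot : ∀ k, g k + 36 * s * t k ≤ q ^ k / 3 := by
    intro k
    induction k with
    | zero => simpa using h₀
    | succ k ih =>
      have hqk : q ^ k ≤ 1 := pow_le_one₀ (by linarith) hq₁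
      have hst : 0 ≤ s * t k := mul_nonneg (by linarith) (ht k)
      have hst' : s * t (k + 1) ≤ 2 / 3 * (s * t k) := by
        nlinarith [ht_succ k (by linarith [h2t k])]
      calc g (k + 1) + 36 * s * t (k + 1) ≤ q * (g k + 36 * s * t k) := by
            nlinarith [mul_le_mul_of_nonneg_left hst' (by linarith : (0 : ℝ) ≤ q + 36),
              hg_succ k, mul_le_mul_of_nonneg_right hq hst]
        _ ≤ q * (q ^ k / 3) := mul_le_mul_of_nonneg_left ih (by linarith)
        _ = q ^ (k + 1) / 3 := by ring
  linarith [hpot k, h2t k]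

end Recursion

theorem greedy_broyden_superlinear_ratio_general {n : ℕ} (hn : 2 ≤ n)
    (F : (Fin n → ℝ) → (Fin n → ℝ))
    (J : (Fin n → ℝ) → Matrix (Fin n) (Fin n) ℝ)
    (hF : ∀ x, HasFDerivAt F (matCLM (J x)) x)
    (xs : Fin n → ℝ) (hxs : F xs = 0) (hJs : IsUnit (J xs))
    (c : ℝ) (hc : c = specNorm (J xs)⁻¹)
    (M : ℝ) (hM : 0 < M)
    (hLip : ∀ x, specNorm (J x - J xs) ≤ M * vecNorm (x - xs))
    (x : ℕ → (Fin n → ℝ)) (B : ℕ → Matrix (Fin n) (Fin n) ℝ) (idx : ℕ → Fin n)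
    (hxrec : ∀ k, x (k + 1) = x k - (B k)⁻¹.mulVec (F (x k)))
    (hgreedy : ∀ k, ∀ i : Fin n,
      vecNorm ((B k - J (x (k + 1))).mulVec (Pi.single i 1))
        ≤ vecNorm ((B k - J (x (k + 1))).mulVec (Pi.single (idx k) 1)))
    (hBrec : ∀ k, B (k + 1) = broyd (B k) (J (x (k + 1))) (Pi.single (idx k) 1))
    (hinit : 48 * Real.sqrt n * c * M * vecNorm (x 0 - xs)
      + c * frobNorm (B 0 - J (x 0)) ≤ 1 / 3) :
    ∀ k : ℕ, vecNorm (x (k + 1) - xs)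
      ≤ Real.exp 1 * (1 - 1 / (n : ℝ)) ^ ((k : ℝ) / 2) * vecNorm (x k - xs) := by
  subst hc
  set c := specNorm (J xs)⁻¹
  set q := √(1 - 1 / (n : ℝ))
  obtain ⟨hq, hq₁⟩ := sqrt_one_sub_one_div_mem_Icc hn
  have hcM : 0 ≤ c * M := mul_nonneg (specNorm_nonneg _) hM.le
  have hstep : ∀ k r, c * frobNorm (B k - J (x k)) + 2 * (c * M * vecNorm (x k - xs)) ≤ r →
      r ≤ 1 / 2 → vecNorm (x (k + 1) - xs) ≤ 2 * r * vecNorm (x k - xs) := fun k r h h' =>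
    hxrec k ▸ vecNorm_quasiNewton_step_le hF hxs hJs hM.le hLip (B k) (x k) (by linarith) h'
  have hpot := greedy_broyden_potential_le (g := fun k => c * frobNorm (B k - J (x k)))
    (t := fun k => c * M * vecNorm (x k - xs)) (s := √n) (q := q)
    (fun k => mul_nonneg hcM (vecNorm_nonneg _)) (Real.one_le_sqrt.2 (Nat.one_le_cast.2 (by omega)))
    hq hq₁
    (by nlinarith [mul_nonneg (Real.sqrt_nonneg n) (mul_nonneg hcM (vecNorm_nonneg (x 0 - xs)))])
    (fun k hk => by nlinarith [hstep k (1 / 3) hk (by norm_num)])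
    (fun k => by
      have h := frobNorm_broyd_greedy_sub_le hM.le hLip (B k) (x k) (x (k + 1)) (idx k) (hgreedy k)
      have h' := mul_le_mul_of_nonneg_left h (specNorm_nonneg (J xs)⁻¹)
      simp only [hBrec k]
      linarith)
  intro k
  have hqk : q ^ k ≤ 1 := pow_le_one₀ (by linarith) hq₁
  rw [Real.rpow_div_two_eq_sqrt _ (Real.sqrt_pos.1 (by linarith)).le, Real.rpow_natCast]
  calc vecNorm (x (k + 1) - xs) ≤ 2 * (q ^ k / 3) * vecNorm (x k - xs) :=
        hstep k _ (hpot k) (by linarith)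
    _ ≤ Real.exp 1 * q ^ k * vecNorm (x k - xs) := by
        refine mul_le_mul_of_nonneg_right ?_ (vecNorm_nonneg _)
        nlinarith [Real.add_one_le_exp 1, pow_nonneg (show 0 ≤ q by linarith) k]

theorem greedy_broyden_superlinear_ratio {n : ℕ} (hn : 2 ≤ n)
    (F : (Fin n → ℝ) → (Fin n → ℝ))
    (J : (Fin n → ℝ) → Matrix (Fin n) (Fin n) ℝ)
    (hF : ∀ x, HasFDerivAt F (matCLM (J x)) x)
    (xs : Fin n → ℝ) (hxs : F xs = 0) (hJs : IsUnit (J xs))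
    (c : ℝ) (hc : c = specNorm (J xs)⁻¹)
    (M : ℝ) (hM : 0 < M)
    (hLip : ∀ x, specNorm (J x - J xs) ≤ M * vecNorm (x - xs))
    (x : ℕ → (Fin n → ℝ)) (B : ℕ → Matrix (Fin n) (Fin n) ℝ) (idx : ℕ → Fin n)
    (hBinv : ∀ k, IsUnit (B k))
    (hxrec : ∀ k, x (k + 1) = x k - (B k)⁻¹.mulVec (F (x k)))
    (hgreedy : ∀ k, ∀ i : Fin n,
      vecNorm ((B k - J (x (k + 1))).mulVec (Pi.single i 1))
        ≤ vecNorm ((B k - J (x (k + 1))).mulVec (Pi.single (idx k) 1)))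
    (hBrec : ∀ k, B (k + 1) = broyd (B k) (J (x (k + 1))) (Pi.single (idx k) 1))
    (hinit : 48 * Real.sqrt n * c * M * vecNorm (x 0 - xs)
      + c * frobNorm (B 0 - J (x 0)) ≤ 1 / 3) :
    ∀ k : ℕ, vecNorm (x (k + 1) - xs)
      ≤ Real.exp 1 * (1 - 1 / (n : ℝ)) ^ ((k : ℝ) / 2) * vecNorm (x k - xs) :=
  greedy_broyden_superlinear_ratio_general hn F J hF xs hxs hJs c hc M hM hLip x B idx hxrec hgreedy
    hBrec hinit
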